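/- For all real parameters p, q, the Ricci tensor of the 5-dimensional example, defined by ρ(y, z) = trace of the linear map x ↦ R(x, y)z where R(x, y)z = ∇ₓ∇_y z - ∇_y∇ₓ z - ∇_{[x,y]} z, equals 4η⊗η (so the manifold is η-Einstein with constants (a, b, c) = (0, 0, 4)), and the scalar curvature τ = ρ(e₀,e₀) + ρ(e₁,e₁) + ρ(e₂,e₂) - ρ(e₃,e₃) - ρ(e₄,e₄) equals 4. -/
import Mathlib


set_option maxHeartbeats 1000000

noncomputable section

/-- The underlying 5-dimensional real vector space. -/
abbrev V5 := Fin 5 → ℝ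

/-- The basis `(e₀, e₁, e₂, e₃, e₄)` (standard basis of `ℝ⁵`). -/
def e5 (i : Fin 5) : V5 := Pi.single i 1

/-- The Lie bracket: the bilinear extension of
`[e₀,e₁] = p e₂ + e₃ + q e₄`, `[e₀,e₂] = -p e₁ - q e₃ + e₄`,
`[e₀,e₃] = -e₁ - q e₂ + p e₄`, `[e₀,e₄] = q e₁ - e₂ - p e₃`,
all other brackets of basis vectors being zero. -/
def br5 (p q : ℝ) (x y : V5) : V5 :=
  (x 0 * y 1 - y 0 * x 1) • (![0, 0, p, 1, q] : V5)
    + (x 0 * y 2 - y 0 * x 2) • (![0, -p, 0, -q, 1] : V5)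
    + (x 0 * y 3 - y 0 * x 3) • (![0, -1, -q, 0, p] : V5)
    + (x 0 * y 4 - y 0 * x 4) • (![0, q, -1, -p, 0] : V5)

/-- The B-metric `g`: `g(e₀,e₀) = g(e₁,e₁) = g(e₂,e₂) = 1`,
`g(e₃,e₃) = g(e₄,e₄) = -1`, `g(eᵢ,eⱼ) = 0` for `i ≠ j`. -/
def gM5 (x y : V5) : ℝ :=
  x 0 * y 0 + x 1 * y 1 + x 2 * y 2 - x 3 * y 3 - x 4 * y 4

/-- The structure endomorphism `φ`:
`φe₁ = e₃`, `φe₂ = e₄`, `φe₃ = -e₁`, `φe₄ = -e₂`, `φe₀ = 0`. -/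
def phi5 (x : V5) : V5 := ![0, -(x 3), -(x 4), x 1, x 2]

/-- The Reeb vector field `ξ = e₀`. -/
def xi5 : V5 := e5 0

/-- The contact form `η`: `η(e₀) = 1`, `η(eᵢ) = 0` for `i = 1,…,4`. -/
def eta5 (x : V5) : ℝ := x 0

/-- The Koszul formula for the Levi-Civita connection of a left-invariant metric. -/
def Koszul5 (p q : ℝ) (nabla : V5 → V5 → V5) : Prop :=
  ∀ x y z : V5,
    2 * gM5 (nabla x y) z
      = gM5 (br5 p q x y) z - gM5 (br5 p q y z) x + gM5 (br5 p q z x) y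

/-- The curvature tensor `R(x,y)z = ∇ₓ∇_y z - ∇_y ∇ₓ z - ∇_{[x,y]} z`. -/
def R5 (p q : ℝ) (nabla : V5 → V5 → V5) (x y z : V5) : V5 :=
  nabla x (nabla y z) - nabla y (nabla x z) - nabla (br5 p q x y) z

/-- The Ricci tensor `ρ(y,z)`: the trace of the map `x ↦ R(x,y)z`,
computed in the standard basis. -/
def ric5 (p q : ℝ) (nabla : V5 → V5 → V5) (y z : V5) : ℝ :=
  ∑ i : Fin 5, R5 p q nabla (e5 i) y z i


/-- Explicit Levi-Civita connection. -/
def N5 (p q : ℝ) (x y : V5) : V5 :=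
  ![-(x 1 * y 3) - x 2 * y 4 - x 3 * y 1 - x 4 * y 2,
    -p * x 0 * y 2 + q * x 0 * y 4 + x 3 * y 0,
    p * x 0 * y 1 - q * x 0 * y 3 + x 4 * y 0,
    -p * x 0 * y 4 - q * x 0 * y 2 - x 1 * y 0,
    p * x 0 * y 3 + q * x 0 * y 1 - x 2 * y 0]

lemma e5_0 : e5 0 = ![1,0,0,0,0] := by funext j; fin_cases j <;> simp [e5]
lemma e5_1 : e5 1 = ![0,1,0,0,0] := by funext j; fin_cases j <;> simp [e5]
lemma e5_2 : e5 2 = ![0,0,1,0,0] := by funext j; fin_cases j <;> simp [e5]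
lemma e5_3 : e5 3 = ![0,0,0,1,0] := by funext j; fin_cases j <;> simp [e5]
lemma e5_4 : e5 4 = ![0,0,0,0,1] := by funext j; fin_cases j <;> simp [e5]

lemma nabla_eq (p q : ℝ) (nabla : V5 → V5 → V5) (hK : Koszul5 p q nabla) :
    nabla = N5 p q := by
  funext x y i
  have h0 := hK x y (e5 0)
  have h1 := hK x y (e5 1)
  have h2 := hK x y (e5 2)
  have h3 := hK x y (e5 3)
  have h4 := hK x y (e5 4)
  simp only [gM5, br5, e5_0, e5_1, e5_2, e5_3, e5_4, Pi.add_apply, Pi.smul_apply,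
    smul_eq_mul, Matrix.cons_val_zero, Matrix.cons_val_one, Matrix.head_cons,
    Matrix.cons_val_two, Matrix.tail_cons, Matrix.cons_val_three,
    Matrix.cons_val_four] at h0 h1 h2 h3 h4
  ring_nf at h0 h1 h2 h3 h4
  fin_cases i <;>
    · simp only [N5, show ((⟨0, by norm_num⟩ : Fin 5) = 0) from rfl,
        show ((⟨1, by norm_num⟩ : Fin 5) = 1) from rfl,
        show ((⟨2, by norm_num⟩ : Fin 5) = 2) from rfl,
        show ((⟨3, by norm_num⟩ : Fin 5) = 3) from rfl,
        show ((⟨4, by norm_num⟩ : Fin 5) = 4) from rfl,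
        Matrix.cons_val_zero, Matrix.cons_val_one, Matrix.head_cons,
        Matrix.cons_val_two, Matrix.tail_cons, Matrix.cons_val_three,
        Matrix.cons_val_four]
      linarith [h0, h1, h2, h3, h4]

/-- For all real parameters `p, q`, the Ricci tensor of the 5-dimensional example
equals `4 η⊗η` (so the manifold is η-Einstein with constants `(a,b,c) = (0,0,4)`),
and the scalar curvature
`τ = ρ(e₀,e₀) + ρ(e₁,e₁) + ρ(e₂,e₂) - ρ(e₃,e₃) - ρ(e₄,e₄)` equals `4`. -/
theorem ricci_5dim (p q : ℝ) (nabla : V5 → V5 → V5) (hK : Koszul5 p q nabla) :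
    (∀ y z : V5, ric5 p q nabla y z = 4 * eta5 y * eta5 z) ∧
    ric5 p q nabla (e5 0) (e5 0) + ric5 p q nabla (e5 1) (e5 1)
      + ric5 p q nabla (e5 2) (e5 2) - ric5 p q nabla (e5 3) (e5 3)
      - ric5 p q nabla (e5 4) (e5 4) = 4 := by
  have hN := nabla_eq p q nabla hK
  subst hN
  have key : ∀ y z : V5, ric5 p q (N5 p q) y z = 4 * eta5 y * eta5 z := by
    intro y z
    simp only [ric5, R5, Fin.sum_univ_five, N5, br5, eta5, e5_0, e5_1, e5_2, e5_3, e5_4,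
      Pi.add_apply, Pi.sub_apply, Pi.smul_apply, smul_eq_mul,
      Matrix.cons_val_zero, Matrix.cons_val_one, Matrix.head_cons,
      Matrix.cons_val_two, Matrix.tail_cons, Matrix.cons_val_three,
      Matrix.cons_val_four]
    ring
  refine ⟨key, ?_⟩
  simp only [key, eta5, e5_0, e5_1, e5_2, e5_3, e5_4,
    Matrix.cons_val_zero, Matrix.cons_val_one, Matrix.head_cons,
    Matrix.cons_val_two, Matrix.tail_cons, Matrix.cons_val_three,
    Matrix.cons_val_four]
  norm_num
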